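/- For every positive integer m, T(m) = (3(m+1)/(16(4m−1))) · ∫_0^2 t · F_m(t) dt, where F_m(t) = Σ_{k=0}^{m−1} [(5/2)_k · (1−m)_k / ((2−4m)_k · k!)] · t^k is the terminating hypergeometric polynomial ₂F₁(5/2, 1−m; 2−4m; t). -/

import Mathlib

/-- `T m = ∑_{r=2}^{m+1} C(2r, r) C(m+1, r) (r−1)/(2^r C(4m, r))`. -/
noncomputable def T (m : ℕ) : ℝ :=
  ∑ r ∈ Finset.Icc 2 (m + 1),
    (Nat.choose (2 * r) r : ℝ) * (Nat.choose (m + 1) r : ℝ) * ((r : ℝ) - 1) /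
      (2 ^ r * (Nat.choose (4 * m) r : ℝ))

/-- Rising factorial (Pochhammer symbol) `(a)_n = a (a+1) ⋯ (a+n−1)`. -/
noncomputable def poch (a : ℝ) (n : ℕ) : ℝ := ∏ i ∈ Finset.range n, (a + i)

/-- The terminating hypergeometric polynomial `₂F₁(5/2, 1−m; 2−4m; t)`. -/
noncomputable def F (m : ℕ) (t : ℝ) : ℝ :=
  ∑ k ∈ Finset.range m,
    poch (5 / 2) k * poch (1 - (m : ℝ)) k / (poch (2 - 4 * (m : ℝ)) k * (Nat.factorial k : ℝ)) *
      t ^ k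

lemma poch_succ (a : ℝ) (n : ℕ) : poch a (n + 1) = poch a n * (a + n) :=
  Finset.prod_range_succ _ _

lemma poch_zero (a : ℝ) : poch a 0 = 1 := Finset.prod_range_zero _

lemma Qlem (m k : ℕ) (hm : 1 ≤ m) (hk : k < m) :
    (Nat.choose (2 * (k + 2)) (k + 2) : ℝ) * (Nat.choose (m + 1) (k + 2) : ℝ) * ((k : ℝ) + 1) *
        (16 * (4 * (m : ℝ) - 1)) * poch (2 - 4 * (m : ℝ)) k * (Nat.factorial k : ℝ) *
        ((k : ℝ) + 2) =
      3 * ((m : ℝ) + 1) * poch (5 / 2) k * poch (1 - (m : ℝ)) k * 2 ^ (k + 2) * 2 ^ (k + 2) *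
        (Nat.choose (4 * m) (k + 2) : ℝ) := by
  induction k with
  | zero =>
      have h1 : ((Nat.choose (m + 1) 2 : ℕ) : ℝ) = (m + 1) * ((m : ℝ) + 1 - 1) / 2 := by
        rw [Nat.cast_choose_two]; push_cast; ring
      have h2 : ((Nat.choose (4 * m) 2 : ℕ) : ℝ) = (4 * (m : ℝ)) * (4 * (m : ℝ) - 1) / 2 := by
        rw [Nat.cast_choose_two]; push_cast; ring
      simp only [poch_zero]
      norm_num [h1, h2, show Nat.choose 4 2 = 6 from rfl]
      ring
  | succ k ih =>
      have hk' : k < m := Nat.lt_of_succ_lt hk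
      have IH := ih hk'
      have hle1 : k + 2 ≤ m + 1 := by omega
      have hle2 : k + 2 ≤ 4 * m := by omega
      have hA : ((Nat.choose (2 * (k + 3)) (k + 3) : ℕ) : ℝ) * ((k : ℝ) + 3) =
          2 * (2 * (k : ℝ) + 5) * (Nat.choose (2 * (k + 2)) (k + 2) : ℕ) := by
        have h' : (k + 3) * Nat.choose (2 * (k + 3)) (k + 3) =
            2 * (2 * (k + 2) + 1) * Nat.choose (2 * (k + 2)) (k + 2) := by
          simpa [Nat.centralBinom] using Nat.succ_mul_centralBinom_succ (k + 2)
        have := congrArg (Nat.cast (R := ℝ)) h'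
        push_cast at this
        linarith
      have hB : ((Nat.choose (m + 1) (k + 3) : ℕ) : ℝ) * ((k : ℝ) + 3) =
          (Nat.choose (m + 1) (k + 2) : ℕ) * ((m : ℝ) - 1 - k) := by
        have := congrArg (Nat.cast (R := ℝ)) (Nat.choose_succ_right_eq (m + 1) (k + 2))
        rw [Nat.cast_mul, Nat.cast_mul, Nat.cast_sub hle1] at this
        push_cast at this ⊢
        linarith
      have hC : ((Nat.choose (4 * m) (k + 3) : ℕ) : ℝ) * ((k : ℝ) + 3) =
          (Nat.choose (4 * m) (k + 2) : ℕ) * (4 * (m : ℝ) - 2 - k) := by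
        have := congrArg (Nat.cast (R := ℝ)) (Nat.choose_succ_right_eq (4 * m) (k + 2))
        rw [Nat.cast_mul, Nat.cast_mul, Nat.cast_sub hle2] at this
        push_cast at this ⊢
        linarith
      have h3 : ((k : ℝ) + 3) ≠ 0 := by positivity
      simp only [show k + 1 + 2 = k + 3 from rfl, show k + 1 + 1 = k + 2 from rfl,
        poch_succ, Nat.factorial_succ]
      push_cast
      apply mul_left_cancel₀ (pow_ne_zero 2 h3)
      linear_combination
        (((Nat.choose (m + 1) (k + 3) : ℕ) : ℝ) * ((k : ℝ) + 3) * ((k : ℝ) + 2) *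
            (16 * (4 * (m : ℝ) - 1)) * poch (2 - 4 * (m : ℝ)) k * (2 - 4 * (m : ℝ) + k) *
            ((k : ℝ) + 1) * (Nat.factorial k : ℝ) * ((k : ℝ) + 3)) * hA +
        (2 * (2 * (k : ℝ) + 5) * ((Nat.choose (2 * (k + 2)) (k + 2) : ℕ) : ℝ) * ((k : ℝ) + 2) *
            (16 * (4 * (m : ℝ) - 1)) * poch (2 - 4 * (m : ℝ)) k * (2 - 4 * (m : ℝ) + k) *
            ((k : ℝ) + 1) * (Nat.factorial k : ℝ) * ((k : ℝ) + 3)) * hB +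
        (2 * (2 * (k : ℝ) + 5) * ((m : ℝ) - 1 - k) * (2 - 4 * (m : ℝ) + k) * ((k : ℝ) + 3)) * IH -
        (3 * ((m : ℝ) + 1) * poch (5 / 2) k * (5 / 2 + k) * poch (1 - (m : ℝ)) k *
            (1 - (m : ℝ) + k) * 2 ^ (k + 3) * 2 ^ (k + 3) * ((k : ℝ) + 3)) * hC

lemma poch_denom_ne (m k : ℕ) (hm : 1 ≤ m) (hk : k ≤ m) :
    poch (2 - 4 * (m : ℝ)) k ≠ 0 := by
  unfold poch
  apply Finset.prod_ne_zero_iff.2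
  intro i hi
  have hi' : i < k := Finset.mem_range.1 hi
  have h1 : (i : ℝ) < m := by exact_mod_cast lt_of_lt_of_le hi' hk
  have hm' : (1:ℝ) ≤ m := by exact_mod_cast hm
  nlinarith

/-- Integral representation:
`T(m) = (3(m+1)/(16(4m−1))) ∫_0^2 t ₂F₁(5/2, 1−m; 2−4m; t) dt`. -/
theorem T_integral (m : ℕ) (hm : 1 ≤ m) :
    T m = (3 * ((m : ℝ) + 1) / (16 * (4 * (m : ℝ) - 1))) * ∫ t in (0 : ℝ)..2, t * F m t := by
  have hInt : (∫ t in (0 : ℝ)..2, t * F m t) =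
      ∑ k ∈ Finset.range m,
        poch (5 / 2) k * poch (1 - (m : ℝ)) k /
          (poch (2 - 4 * (m : ℝ)) k * (Nat.factorial k : ℝ)) * (2 ^ (k + 2) / ((k : ℝ) + 2)) := by
    have h1 : ∀ t : ℝ, t * F m t = ∑ k ∈ Finset.range m,
        poch (5 / 2) k * poch (1 - (m : ℝ)) k /
          (poch (2 - 4 * (m : ℝ)) k * (Nat.factorial k : ℝ)) * t ^ (k + 1) := by
      intro t
      rw [F, Finset.mul_sum]
      refine Finset.sum_congr rfl fun k _ => ?_
      ring
    rw [intervalIntegral.integral_congr (fun t _ => h1 t)]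
    rw [intervalIntegral.integral_finset_sum]
    · refine Finset.sum_congr rfl fun k _ => ?_
      rw [intervalIntegral.integral_const_mul, integral_pow]
      congr 1
      rw [zero_pow (by omega : k + 1 + 1 ≠ 0), sub_zero]
      push_cast
      ring
    · intro k _
      exact (Continuous.intervalIntegrable (by continuity) _ _)
  rw [hInt, Finset.mul_sum]
  rw [T, show Finset.Icc 2 (m + 1) = Finset.Ico 2 (m + 2) from rfl,
    Finset.sum_Ico_eq_sum_range]
  simp only [show m + 2 - 2 = m from rfl]
  refine Finset.sum_congr rfl fun k hk => ?_
  have hkm : k < m := Finset.mem_range.1 hk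
  have e2 : 2 + k = k + 2 := by omega
  rw [e2]
  have hQ := Qlem m k hm hkm
  have hne1 : (2 : ℝ) ^ (k + 2) ≠ 0 := by positivity
  have hne2 : ((Nat.choose (4 * m) (k + 2) : ℕ) : ℝ) ≠ 0 := by
    have : 0 < Nat.choose (4 * m) (k + 2) := Nat.choose_pos (by omega)
    positivity
  have hne3 : (16 * (4 * (m : ℝ) - 1)) ≠ 0 := by
    have : (1:ℝ) ≤ m := by exact_mod_cast hm
    nlinarith
  have hne4 : poch (2 - 4 * (m : ℝ)) k ≠ 0 := poch_denom_ne m k hm (le_of_lt hkm)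
  have hne5 : ((Nat.factorial k : ℕ) : ℝ) ≠ 0 := by positivity
  have hne6 : ((k : ℝ) + 2) ≠ 0 := by positivity
  push_cast
  generalize poch (2 - 4 * (m : ℝ)) k = P at hne4 hQ ⊢
  generalize 4 * (m : ℝ) - 1 = D at hne3 hQ ⊢
  have hD : D ≠ 0 := right_ne_zero_of_mul hne3
  field_simp
  linear_combination hQ
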